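/- arXiv:2504.08971 — 3 statements merged into one kernel-verified Lean document; each statement's English description precedes it below -/
import Mathlib

section
/- For orthonormal families {ψ_i}_{i=1}^n and {φ_i}_{i=1}^n in H, let U be a unitary operator with Uψ_i = φ_i for all i, and for 0 ≤ k ≤ n let Ψ_k = (U^{⊗k} ⊗ Id^{⊗(n−k)})Ψ where Ψ is the Slater determinant of the ψ_i. Then for each 1 ≤ k ≤ n, |⟨Ψ_k, Ψ_{k−1}⟩| = |(1/n) Σ_{i=1}^n ⟨φ_i, ψ_i⟩|. -/
/-!
Orthonormality of the two one-particle families makes the double sum diagonal: off site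
`k` the two tensor factors carry the same orthonormal family, and two permutations that
agree off a single site are equal, so only `τ = τ'` contributes, with weight
`sgn τ ^ 2 = 1` and value `⟪φ (τ (k-1)), ψ (τ (k-1))⟫` (sites are indexed from `0`).
Averaging over `S_n`, every index is hit by `τ (k-1)` equally often, which turns
`(1/n!) Σ_τ` into `(1/n) Σ_i`.
-/

open scoped InnerProductSpace
open Equiv Finset

theorem Equiv.Perm.eq_of_apply_eq_of_ne {α : Type*} [Fintype α] [DecidableEq α]
    {σ τ : Perm α} (m : α) (h : ∀ i ≠ m, σ i = τ i) : σ = τ := by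
  have hsupp : (τ⁻¹ * σ).support ⊆ {m} := fun i hi => by
    by_contra him
    exact Perm.mem_support.mp hi (by simp [Perm.mul_apply, h i (by simpa using him)])
  simpa [inv_mul_eq_one, eq_comm] using
    Perm.card_support_le_one.mp ((card_le_card hsupp).trans (card_singleton m).le)

/-- Multiplied out by `card α`, so that no truncated `(card α - 1)!` appears. -/
theorem Fintype.card_mul_sum_perm_apply {α R : Type*} [Fintype α] [DecidableEq α]
    [CommSemiring R] (g : α → R) (a : α) :
    (Fintype.card α : R) * ∑ σ : Perm α, g (σ a) = (Fintype.card α).factorial * ∑ j, g j := by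
  have hindep : ∀ b, ∑ σ : Perm α, g (σ b) = ∑ σ : Perm α, g (σ a) := fun b =>
    Fintype.sum_equiv (Equiv.mulRight (swap a b)) _ _ fun σ => by simp
  calc (Fintype.card α : R) * ∑ σ : Perm α, g (σ a)
      = ∑ b, ∑ σ : Perm α, g (σ b) := by simp [hindep]
    _ = ∑ σ : Perm α, ∑ j, g j := by
      rw [sum_comm]
      exact Finset.sum_congr rfl fun σ _ => Equiv.sum_comp σ g
    _ = _ := by simp [Fintype.card_perm]

theorem prod_inner_perm_eq_ite {H ι : Type*} [NormedAddCommGroup H] [InnerProductSpace ℂ H]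
    [Fintype ι] [DecidableEq ι] (a b : ι → ι → H) (m : ι)
    (hab : ∀ i ≠ m, a i = b i) (ha : ∀ i ≠ m, Orthonormal ℂ (a i)) (τ τ' : Perm ι) :
    ∏ i, ⟪a i (τ i), b i (τ' i)⟫_ℂ = if τ = τ' then ⟪a m (τ m), b m (τ m)⟫_ℂ else 0 := by
  have hinner : ∀ i ≠ m, ⟪a i (τ i), b i (τ' i)⟫_ℂ = if τ i = τ' i then 1 else 0 :=
    fun i hi => by rw [← hab i hi]; exact orthonormal_iff_ite.mp (ha i hi) _ _
  split_ifs with h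
  · subst h
    exact prod_eq_single m (fun i _ hi => by simp [hinner i hi]) (by simp)
  · obtain ⟨i, him, hne⟩ : ∃ i ≠ m, τ i ≠ τ' i := by
      by_contra! hc
      exact h (Perm.eq_of_apply_eq_of_ne m hc)
    exact prod_eq_zero (mem_univ i) (by simp [hinner i him, hne])

theorem slater_overlap_single_site_general {H : Type*} [NormedAddCommGroup H]
    [InnerProductSpace ℂ H] (n : ℕ) (ψ φ : Fin n → H)
    (hψ : Orthonormal ℂ ψ) (hφ : Orthonormal ℂ φ)
    (k : ℕ) (hk1 : 1 ≤ k) (hkn : k ≤ n) :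
    ‖(1 / (n.factorial : ℂ)) *
        ∑ τ : Perm (Fin n), ∑ τ' : Perm (Fin n),
          (Perm.sign τ : ℂ) * (Perm.sign τ' : ℂ) *
            ∏ i : Fin n,
              ⟪(if (i : ℕ) < k then φ else ψ) (τ i),
               (if (i : ℕ) < k - 1 then φ else ψ) (τ' i)⟫_ℂ‖ =
      ‖(1 / (n : ℂ)) * ∑ i : Fin n, ⟪φ i, ψ i⟫_ℂ‖ := by
  set m : Fin n := ⟨k - 1, by omega⟩
  have hprod (τ τ' : Perm (Fin n)) := prod_inner_perm_eq_ite
    (fun i : Fin n => if (i : ℕ) < k then φ else ψ)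
    (fun i : Fin n => if (i : ℕ) < k - 1 then φ else ψ) m
    (fun i hi => by
      have : (i : ℕ) ≠ k - 1 := Fin.val_ne_of_ne hi
      simp only [show (i : ℕ) < k ↔ (i : ℕ) < k - 1 by omega])
    (fun i _ => by split_ifs; exacts [hφ, hψ]) τ τ'
  have hm : (m : ℕ) < k ∧ ¬ (m : ℕ) < k - 1 := by simp only [m]; omega
  have hdiag : ∑ τ : Perm (Fin n), ∑ τ' : Perm (Fin n),
      (Perm.sign τ : ℂ) * (Perm.sign τ' : ℂ) *
        ∏ i : Fin n, ⟪(if (i : ℕ) < k then φ else ψ) (τ i),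
          (if (i : ℕ) < k - 1 then φ else ψ) (τ' i)⟫_ℂ
      = ∑ τ : Perm (Fin n), ⟪φ (τ m), ψ (τ m)⟫_ℂ := by
    simp_rw [hprod, hm, if_true, if_false, mul_ite, mul_zero, sum_ite_eq]
    simp [← Int.cast_mul, ← Units.val_mul]
  have hcount := Fintype.card_mul_sum_perm_apply (fun j => ⟪φ j, ψ j⟫_ℂ) m
  rw [Fintype.card_fin] at hcount
  have hn : (n : ℂ) ≠ 0 := by norm_cast; omega
  have hfact : (n.factorial : ℂ) ≠ 0 := Nat.cast_ne_zero.mpr n.factorial_ne_zero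
  rw [hdiag]
  congr 1
  field_simp
  linear_combination hcount

/-- Let `{ψ_i}`, `{φ_i}` be orthonormal families in `H`, `U` a unitary with
`Uψ_i = φ_i`, and `Ψ_k = (U^{⊗k} ⊗ Id^{⊗(n-k)}) Ψ` where `Ψ` is the Slater
determinant of the `ψ_i`.  Using the tensor inner product
`⟨⊗ a_i, ⊗ b_i⟩ = ∏ ⟨a_i, b_i⟩`, the overlap is
`⟨Ψ_k, Ψ_{k-1}⟩ = (1/n!) Σ_{τ,τ'} sgn τ sgn τ' ∏_i ⟨c_i(τ i), c'_i(τ' i)⟩`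
with `c_i = φ` for `i < k` and `ψ` otherwise, `c'_i = φ` for `i < k-1` and `ψ`
otherwise; its modulus equals `|(1/n) Σ_i ⟨φ_i, ψ_i⟩|` for every `1 ≤ k ≤ n`. -/
theorem slater_overlap_single_site {H : Type*} [NormedAddCommGroup H]
    [InnerProductSpace ℂ H] (n : ℕ) (ψ φ : Fin n → H)
    (hψ : Orthonormal ℂ ψ) (hφ : Orthonormal ℂ φ)
    (U : H ≃ₗᵢ[ℂ] H) (hU : ∀ i, U (ψ i) = φ i)
    (k : ℕ) (hk1 : 1 ≤ k) (hkn : k ≤ n) :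
    ‖(1 / (n.factorial : ℂ)) *
        ∑ τ : Perm (Fin n), ∑ τ' : Perm (Fin n),
          (Perm.sign τ : ℂ) * (Perm.sign τ' : ℂ) *
            ∏ i : Fin n,
              ⟪(if (i : ℕ) < k then φ else ψ) (τ i),
               (if (i : ℕ) < k - 1 then φ else ψ) (τ' i)⟫_ℂ‖ =
      ‖(1 / (n : ℂ)) * ∑ i : Fin n, ⟪φ i, ψ i⟫_ℂ‖ :=
  slater_overlap_single_site_general n ψ φ hψ hφ k hk1 hkn
end

section
/- Total variation is the Wasserstein distance for the trivial cost: for probability measures μ, ν on a finite set E, the optimal transport cost with cost c(x,y) = 1_{x≠y} equals the total variation distance sup over f : E → [0,1] of ∫f dμ − ∫f dν. -/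
/-!
A coupling `π` of `μ` and `ν` has `π (x, x) ≤ min (μ x) (ν x)`, so it moves off the diagonal at
least the mass `∑ x, (μ x - min (μ x) (ν x))`. This is attained by leaving the common part
`min μ ν` in place and spreading the excess of `μ` proportionally over the excess of `ν`; as the
two excesses have disjoint supports, nothing of the second part lands on the diagonal.
Dually, `∑ x, f x * (μ x - ν x)` with `0 ≤ f ≤ 1` is maximised by the indicator of `{ν < μ}`,
which gives the same value.
-/

open Finset

section

variable {E : Type*} [Fintype E]

structure IsCoupling (μ ν : E → ℝ) (π : E × E → ℝ) : Prop where
  nonneg : ∀ p, 0 ≤ π p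
  marginal_fst : ∀ x, ∑ y, π (x, y) = μ x
  marginal_snd : ∀ y, ∑ x, π (x, y) = ν y

def trivialCost [DecidableEq E] (π : E × E → ℝ) : ℝ :=
  ∑ p : E × E, if p.1 ≠ p.2 then π p else 0

theorem trivialCost_eq_sum_sub_sum_diag [DecidableEq E] (π : E × E → ℝ) :
    trivialCost π = ∑ p, π p - ∑ x, π (x, x) := by
  rw [eq_sub_iff_add_eq, trivialCost, Fintype.sum_prod_type, Fintype.sum_prod_type,
    ← sum_add_distrib]
  refine sum_congr rfl fun x _ => ?_
  have hdiag : π (x, x) = ∑ y, if x = y then π (x, y) else 0 := by simp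
  rw [hdiag, ← sum_add_distrib]
  exact sum_congr rfl fun y _ => by by_cases h : x = y <;> simp [h]

namespace IsCoupling

variable {μ ν μ' ν' : E → ℝ} {π π' : E × E → ℝ}

theorem add (h : IsCoupling μ ν π) (h' : IsCoupling μ' ν' π') :
    IsCoupling (μ + μ') (ν + ν') (π + π') where
  nonneg p := add_nonneg (h.nonneg p) (h'.nonneg p)
  marginal_fst x := by simp [sum_add_distrib, h.marginal_fst, h'.marginal_fst]
  marginal_snd y := by simp [sum_add_distrib, h.marginal_snd, h'.marginal_snd]

theorem sum_eq (h : IsCoupling μ ν π) : ∑ p, π p = ∑ x, μ x := by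
  rw [Fintype.sum_prod_type]
  exact sum_congr rfl fun x _ => h.marginal_fst x

theorem diag_le_min (h : IsCoupling μ ν π) (x : E) : π (x, x) ≤ min (μ x) (ν x) :=
  le_min (h.marginal_fst x ▸ single_le_sum (fun y _ => h.nonneg (x, y)) (mem_univ x))
    (h.marginal_snd x ▸ single_le_sum (fun y _ => h.nonneg (y, x)) (mem_univ x))

theorem sum_sub_min_le_trivialCost [DecidableEq E] (h : IsCoupling μ ν π) :
    ∑ x, (μ x - min (μ x) (ν x)) ≤ trivialCost π := by
  rw [trivialCost_eq_sum_sub_sum_diag, h.sum_eq, sum_sub_distrib]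
  exact sub_le_sub_left (sum_le_sum fun x _ => h.diag_le_min x) _

end IsCoupling

theorem isCoupling_diag [DecidableEq E] {m : E → ℝ} (hm : ∀ x, 0 ≤ m x) :
    IsCoupling m m (fun p => if p.1 = p.2 then m p.1 else 0) where
  nonneg p := by split_ifs <;> simp [hm]
  marginal_fst x := by simp
  marginal_snd y := by simp

theorem mul_sum_div_sum_of_nonneg {g : E → ℝ} (hg : ∀ x, 0 ≤ g x) (x : E) :
    g x * (∑ y, g y) / ∑ y, g y = g x := by
  by_cases h : ∑ y, g y = 0
  · simp [(sum_eq_zero_iff_of_nonneg fun y _ => hg y).1 h x (mem_univ x)]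
  · field_simp

theorem isCoupling_mul_div_sum {a b : E → ℝ} (ha : ∀ x, 0 ≤ a x) (hb : ∀ x, 0 ≤ b x)
    (hab : ∑ x, a x = ∑ x, b x) : IsCoupling a b (fun p => a p.1 * b p.2 / ∑ x, a x) where
  nonneg p := div_nonneg (mul_nonneg (ha _) (hb _)) (sum_nonneg fun x _ => ha x)
  marginal_fst x := by
    dsimp only
    rw [← sum_div, ← mul_sum, ← hab, mul_sum_div_sum_of_nonneg ha]
  marginal_snd y := by
    dsimp only
    rw [← sum_div, ← sum_mul, mul_comm, hab, mul_sum_div_sum_of_nonneg hb]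

theorem exists_isCoupling_trivialCost_eq [DecidableEq E] {μ ν : E → ℝ} (hμ : ∀ x, 0 ≤ μ x)
    (hν : ∀ x, 0 ≤ ν x) (hμν : ∑ x, μ x = ∑ x, ν x) :
    ∃ π, IsCoupling μ ν π ∧ trivialCost π = ∑ x, (μ x - min (μ x) (ν x)) := by
  set m : E → ℝ := fun x => min (μ x) (ν x)
  set a : E → ℝ := fun x => μ x - m x
  set b : E → ℝ := fun x => ν x - m x
  have hdiag := isCoupling_diag (m := m) fun x => le_min (hμ x) (hν x)
  have hexcess := isCoupling_mul_div_sum (a := a) (b := b)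
    (fun x => sub_nonneg.2 (min_le_left _ _)) (fun x => sub_nonneg.2 (min_le_right _ _))
    (by simp only [a, b, sum_sub_distrib, hμν])
  have hπ := hdiag.add hexcess
  rw [show m + a = μ by ext; simp [a], show m + b = ν by ext; simp [b]] at hπ
  refine ⟨_, hπ, ?_⟩
  have hab : ∀ x, a x * b x = 0 := fun x => by
    rcases le_total (μ x) (ν x) with h | h <;> simp [a, b, m, h]
  rw [trivialCost_eq_sum_sub_sum_diag, hπ.sum_eq, ← sum_sub_distrib]
  simp [hab, a]

theorem mul_sub_le_sub_min {t a b : ℝ} (ht : t ∈ Set.Icc (0 : ℝ) 1) :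
    t * (a - b) ≤ a - min a b := by
  rcases le_total a b with h | h
  · rw [min_eq_left h]; nlinarith [ht.1]
  · rw [min_eq_right h]; nlinarith [ht.2]

theorem ite_lt_mul_sub_eq_sub_min (a b : ℝ) :
    (if b < a then 1 else 0) * (a - b) = a - min a b := by
  split_ifs with h
  · simp [min_eq_right h.le]
  · simp [min_eq_left (not_lt.1 h)]

end

theorem transport_trivial_cost_eq_tv_general {E : Type*} [Fintype E] [DecidableEq E]
    (μ ν : E → ℝ)
    (hμ0 : ∀ x, 0 ≤ μ x) (hν0 : ∀ x, 0 ≤ ν x)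
    (hμ1 : ∑ x, μ x = 1) (hν1 : ∑ x, ν x = 1) :
    sInf { c : ℝ | ∃ π : E × E → ℝ, (∀ p, 0 ≤ π p) ∧
        (∀ x, ∑ y, π (x, y) = μ x) ∧ (∀ y, ∑ x, π (x, y) = ν y) ∧
        c = ∑ p : E × E, if p.1 ≠ p.2 then π p else 0 } =
      sSup { t : ℝ | ∃ f : E → ℝ, (∀ x, 0 ≤ f x ∧ f x ≤ 1) ∧
        t = ∑ x, f x * (μ x - ν x) } := by
  trans ∑ x, (μ x - min (μ x) (ν x))
  · refine IsLeast.csInf_eq ⟨?_, ?_⟩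
    · obtain ⟨π, hπ, hcost⟩ := exists_isCoupling_trivialCost_eq hμ0 hν0 (hμ1.trans hν1.symm)
      exact ⟨π, hπ.nonneg, hπ.marginal_fst, hπ.marginal_snd, hcost.symm⟩
    · rintro c ⟨π, hπ0, hπμ, hπν, rfl⟩
      exact IsCoupling.sum_sub_min_le_trivialCost ⟨hπ0, hπμ, hπν⟩
  · refine (IsGreatest.csSup_eq ⟨?_, ?_⟩).symm
    · refine ⟨fun x => if ν x < μ x then 1 else 0, fun x => ?_, ?_⟩
      · dsimp only
        split_ifs <;> norm_num
      · exact (sum_congr rfl fun x _ => ite_lt_mul_sub_eq_sub_min (μ x) (ν x)).symm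
    · rintro t ⟨f, hf, rfl⟩
      exact sum_le_sum fun x _ => mul_sub_le_sub_min (hf x)

/-- For probability measures `μ, ν` on a finite set `E` (given by their mass
functions), the optimal transport cost for the trivial cost `c(x,y) = 1_{x≠y}`
equals the total variation distance `sup_{f : E → [0,1]} Σ f(μ - ν)`. -/
theorem transport_trivial_cost_eq_tv {E : Type*} [Fintype E] [DecidableEq E]
    [Nonempty E] (μ ν : E → ℝ)
    (hμ0 : ∀ x, 0 ≤ μ x) (hν0 : ∀ x, 0 ≤ ν x)
    (hμ1 : ∑ x, μ x = 1) (hν1 : ∑ x, ν x = 1) :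
    sInf { c : ℝ | ∃ π : E × E → ℝ, (∀ p, 0 ≤ π p) ∧
        (∀ x, ∑ y, π (x, y) = μ x) ∧ (∀ y, ∑ x, π (x, y) = ν y) ∧
        c = ∑ p : E × E, if p.1 ≠ p.2 then π p else 0 } =
      sSup { t : ℝ | ∃ f : E → ℝ, (∀ x, 0 ≤ f x ∧ f x ≤ 1) ∧
        t = ∑ x, f x * (μ x - ν x) } :=
  transport_trivial_cost_eq_tv_general μ ν hμ0 hν0 hμ1 hν1
end

section
/- The quantum Wasserstein distance of order 1 dominates the trace distance: for any two density operators ρ, σ on H^{⊗n}, ‖ρ−σ‖₁ ≤ ‖ρ−σ‖_{W1}. -/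
open scoped ComplexOrder
open Finset

/-- Half the trace norm `(1/2) tr|X|` of a Hermitian matrix, via eigenvalues. -/
noncomputable def halfTraceNorm {m : Type*} [Fintype m] [DecidableEq m]
    (X : Matrix m m ℂ) : ℝ :=
  if h : X.IsHermitian then (1 / 2) * ∑ i, |h.eigenvalues i| else 0

/-- The quantum Wasserstein distance of order 1 on `(ℂ^d)^{⊗n}`, operators
modelled as matrices indexed by `Fin n → Fin d`: the infimum of
`Σ_i ‖X^{(i)}‖₁` over decompositions `ρ - σ = Σ_i X^{(i)}` with `X^{(i)}`
self-adjoint and with vanishing partial trace over the `i`-th factor. -/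
noncomputable def qW1 {d n : ℕ}
    (ρ σ : Matrix (Fin n → Fin d) (Fin n → Fin d) ℂ) : ℝ :=
  sInf { c : ℝ | ∃ X : Fin n → Matrix (Fin n → Fin d) (Fin n → Fin d) ℂ,
    ρ - σ = ∑ i, X i ∧ (∀ i, (X i).IsHermitian) ∧
    (∀ i, ∀ a b : Fin n → Fin d,
      ∑ s : Fin d, X i (Function.update a i s) (Function.update b i s) = 0) ∧
    c = ∑ i, halfTraceNorm (X i) }

/-!
The trace norm is subadditive on Hermitian matrices, so every admissible decomposition of `ρ - σ`
costs at least `‖ρ - σ‖₁`. Subadditivity comes from the diagonal of `A` in any orthonormal basis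
`(vᵢ)`: with `(uⱼ)` an eigenbasis, `⟨vᵢ, A vᵢ⟩ = ∑ⱼ λⱼ |⟨vᵢ, uⱼ⟩|²` and `(|⟨vᵢ, uⱼ⟩|²)` is doubly
stochastic, so `∑ᵢ |⟨vᵢ, A vᵢ⟩| ≤ ∑ⱼ |λⱼ|`, with equality for the eigenbasis of `A` itself.

Since `sInf ∅ = 0` in `ℝ`, one also needs an admissible decomposition. With `Δ_S` the completely
depolarizing channel on the sites in `S`, take `X⁽ⁱ⁾ = Δ_{<i}(ρ - σ) - Δ_{≤i}(ρ - σ)`: it telescopes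
to `ρ - σ - Δ_all(ρ - σ) = ρ - σ - tr(ρ - σ) 𝟙 / dⁿ = ρ - σ`, and depolarizing site `i` does not
change the partial trace over site `i`.
-/

open Matrix Function

namespace Matrix

variable {m : Type*} [Fintype m] [DecidableEq m]

lemma sum_norm_sq_apply_of_mem_unitaryGroup {W : Matrix m m ℂ} (hW : W ∈ unitaryGroup m ℂ)
    (j : m) : ∑ i, ‖W i j‖ ^ 2 = 1 := by
  have h := congr_fun₂ (mem_unitaryGroup_iff'.mp hW) j j
  simp only [mul_apply, star_apply, one_apply_eq, RCLike.star_def, Complex.conj_mul'] at h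
  exact_mod_cast h

lemma mul_diagonal_mul_conjTranspose_apply_self (W : Matrix m m ℂ) (f : m → ℝ) (i : m) :
    (W * diagonal (fun j => (f j : ℂ)) * Wᴴ) i i = ((∑ j, f j * ‖W i j‖ ^ 2 : ℝ) : ℂ) := by
  push_cast
  simp only [mul_apply, diagonal_apply, mul_ite, mul_zero, sum_ite_eq', mem_univ, if_true,
    conjTranspose_apply]
  refine sum_congr rfl fun j _ => ?_
  rw [mul_comm (W i j), mul_assoc, ← Complex.mul_conj']
  rfl

lemma sum_norm_diag_unitary_conj_diagonal_le {W : Matrix m m ℂ} (hW : W ∈ unitaryGroup m ℂ)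
    (f : m → ℝ) : ∑ i, ‖(W * diagonal (fun j => (f j : ℂ)) * Wᴴ) i i‖ ≤ ∑ j, |f j| :=
  calc ∑ i, ‖(W * diagonal (fun j => (f j : ℂ)) * Wᴴ) i i‖
      ≤ ∑ i, ∑ j, |f j| * ‖W i j‖ ^ 2 := by
        refine sum_le_sum fun i _ => ?_
        rw [mul_diagonal_mul_conjTranspose_apply_self, Complex.norm_real, Real.norm_eq_abs]
        refine (abs_sum_le_sum_abs _ _).trans_eq (sum_congr rfl fun j _ => ?_)
        rw [abs_mul, abs_of_nonneg (sq_nonneg ‖W i j‖)]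
    _ = ∑ j, |f j| := by
        rw [sum_comm]
        simp only [← mul_sum, sum_norm_sq_apply_of_mem_unitaryGroup hW, mul_one]

namespace IsHermitian

variable {A B : Matrix m m ℂ}

lemma sum_norm_diag_conj_le (hA : A.IsHermitian) {V : Matrix m m ℂ} (hV : V ∈ unitaryGroup m ℂ) :
    ∑ i, ‖(Vᴴ * A * V) i i‖ ≤ ∑ j, |hA.eigenvalues j| := by
  set U : Matrix m m ℂ := (hA.eigenvectorUnitary : Matrix m m ℂ)
  have hW : Vᴴ * U ∈ unitaryGroup m ℂ :=
    Submonoid.mul_mem _ (Unitary.star_mem hV) hA.eigenvectorUnitary.2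
  have hconj : Vᴴ * A * V = (Vᴴ * U) * diagonal (fun j => (hA.eigenvalues j : ℂ)) * (Vᴴ * U)ᴴ := by
    conv_lhs => rw [hA.spectral_theorem]
    simp [conjTranspose_mul, Matrix.mul_assoc, U, Function.comp_def, star_eq_conjTranspose]
  rw [hconj]
  exact sum_norm_diag_unitary_conj_diagonal_le hW _

lemma sum_abs_eigenvalues_eq (hA : A.IsHermitian) :
    ∑ j, |hA.eigenvalues j| =
      ∑ i, ‖((hA.eigenvectorUnitary : Matrix m m ℂ)ᴴ * A * hA.eigenvectorUnitary) i i‖ := by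
  have h := hA.conjStarAlgAut_star_eigenvectorUnitary
  simp only [Unitary.conjStarAlgAut_apply, Unitary.coe_star, star_star] at h
  simp [← star_eq_conjTranspose, h]

lemma sum_abs_eigenvalues_add_le (hA : A.IsHermitian) (hB : B.IsHermitian) :
    ∑ j, |(hA.add hB).eigenvalues j| ≤ ∑ j, |hA.eigenvalues j| + ∑ j, |hB.eigenvalues j| := by
  set U : Matrix m m ℂ := ((hA.add hB).eigenvectorUnitary : Matrix m m ℂ)
  have hU : U ∈ unitaryGroup m ℂ := (hA.add hB).eigenvectorUnitary.2
  calc ∑ j, |(hA.add hB).eigenvalues j| = ∑ i, ‖(Uᴴ * A * U) i i + (Uᴴ * B * U) i i‖ := by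
        simp [sum_abs_eigenvalues_eq, U, Matrix.mul_add, Matrix.add_mul]
    _ ≤ ∑ i, ‖(Uᴴ * A * U) i i‖ + ∑ i, ‖(Uᴴ * B * U) i i‖ := by
        rw [← sum_add_distrib]; exact sum_le_sum fun i _ => norm_add_le _ _
    _ ≤ _ := add_le_add (hA.sum_norm_diag_conj_le hU) (hB.sum_norm_diag_conj_le hU)

end IsHermitian

end Matrix

lemma halfTraceNorm_sum_le {m ι : Type*} [Fintype m] [DecidableEq m] (s : Finset ι)
    (X : ι → Matrix m m ℂ) (hX : ∀ i ∈ s, (X i).IsHermitian) :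
    halfTraceNorm (∑ i ∈ s, X i) ≤ ∑ i ∈ s, halfTraceNorm (X i) := by
  refine le_sum_of_subadditive_on_pred halfTraceNorm IsHermitian ?_ ?_ (fun _ _ => .add) X hX
  · simp [halfTraceNorm, isHermitian_zero.eigenvalues_eq_zero_iff.mpr rfl]
  · intro A B hA hB
    simp only [halfTraceNorm, dif_pos hA, dif_pos hB, dif_pos (hA.add hB)]
    linarith [hA.sum_abs_eigenvalues_add_le hB]

section Depolarize

variable {ι κ : Type*} [Fintype ι] [DecidableEq ι] [Fintype κ]

lemma sum_sum_update (F : (ι → κ) → ℂ) (i : ι) :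
    ∑ s, ∑ c, F (update c i s) = ∑ _s : κ, ∑ c, F c := by
  have hinv : Involutive fun p : (ι → κ) × κ => (update p.1 i p.2, p.1 i) := fun p => by simp
  rw [sum_comm, ← Fintype.sum_prod_type', sum_comm, ← Fintype.sum_prod_type']
  exact Fintype.sum_bijective _ hinv.bijective _ _ fun p => rfl

variable [DecidableEq κ]

/-- `depolarize S M` is `(𝟙 / |κ|)^{⊗ S} ⊗ tr_S M`. The sum runs over all `c : ι → κ` rather than
`c : S → κ`; the factor `|κ|^{|ι \ S|}` this overcounts is absorbed in the normalisation. -/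
noncomputable def depolarize (S : Finset ι) (M : Matrix (ι → κ) (ι → κ) ℂ) :
    Matrix (ι → κ) (ι → κ) ℂ :=
  of fun a b => if ∀ j ∈ S, a j = b j then
    (Fintype.card (ι → κ) : ℂ)⁻¹ * ∑ c, M (S.piecewise c a) (S.piecewise c b) else 0

@[simp]
lemma depolarize_empty (M : Matrix (ι → κ) (ι → κ) ℂ) : depolarize ∅ M = M := by
  ext a b
  have : Nonempty (ι → κ) := ⟨a⟩
  have hN : (Fintype.card (ι → κ) : ℂ) ≠ 0 := Nat.cast_ne_zero.mpr Fintype.card_ne_zero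
  simp only [depolarize, of_apply, notMem_empty, IsEmpty.forall_iff, implies_true, if_true,
    piecewise_empty, sum_const, card_univ, nsmul_eq_mul, inv_mul_cancel_left₀ hN]

lemma depolarize_univ (M : Matrix (ι → κ) (ι → κ) ℂ) :
    depolarize univ M = ((Fintype.card (ι → κ) : ℂ)⁻¹ * M.trace) • (1 : Matrix _ _ ℂ) := by
  ext a b
  simp [depolarize, trace, one_apply, ← funext_iff]

lemma conjTranspose_depolarize (S : Finset ι) (M : Matrix (ι → κ) (ι → κ) ℂ) :
    (depolarize S M)ᴴ = depolarize S Mᴴ := by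
  ext a b
  simp only [depolarize, conjTranspose_apply, of_apply, eq_comm (a := a _)]
  split_ifs <;> simp [star_sum]

lemma Matrix.IsHermitian.depolarize {M : Matrix (ι → κ) (ι → κ) ℂ} (hM : M.IsHermitian)
    (S : Finset ι) :
    (depolarize S M).IsHermitian := by
  rw [IsHermitian, conjTranspose_depolarize, hM]

lemma sum_depolarize_insert_update {S : Finset ι} {i : ι} (hi : i ∉ S)
    (M : Matrix (ι → κ) (ι → κ) ℂ) (a b : ι → κ) :
    ∑ s, depolarize (insert i S) M (update a i s) (update b i s) =
      ∑ s, depolarize S M (update a i s) (update b i s) := by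
  have hne : ∀ j ∈ S, j ≠ i := fun j hj h => hi (h ▸ hj)
  have hcond_insert (s : κ) : (∀ j ∈ insert i S, update a i s j = update b i s j) ↔
      ∀ j ∈ S, a j = b j := by
    simp +contextual [update_of_ne (hne _ _)]
  have hcond (s : κ) : (∀ j ∈ S, update a i s j = update b i s j) ↔ ∀ j ∈ S, a j = b j := by
    simp +contextual [update_of_ne (hne _ _)]
  have hpw_insert (c x : ι → κ) (s : κ) :
      (insert i S).piecewise c (update x i s) = (insert i S).piecewise c x := by
    ext j; by_cases hj : j = i <;> simp [piecewise, hj]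
  have hpw (c x : ι → κ) (s : κ) :
      S.piecewise c (update x i s) = (insert i S).piecewise (update c i s) x := by
    ext j; by_cases hj : j = i <;> simp [piecewise, hj, hi]
  simp only [depolarize, of_apply, hcond_insert, hcond, hpw_insert, hpw]
  split_ifs
  · simp only [← mul_sum,
      sum_sum_update fun c => M ((insert i S).piecewise c a) ((insert i S).piecewise c b)]
  · rfl

end Depolarize

lemma Fin.sum_Iio_sub_Iic {G : Type*} [AddCommGroup G] {n : ℕ} (f : Finset (Fin n) → G) :
    ∑ i, (f (Iio i) - f (Iic i)) = f ∅ - f univ := by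
  set g : ℕ → G := fun k => f {j | (j : ℕ) < k}
  have hIio (i : Fin n) : Iio i = ({j | (j : ℕ) < (i : ℕ)} : Finset (Fin n)) := by
    ext; simp
  have hIic (i : Fin n) : Iic i = ({j | (j : ℕ) < (i : ℕ) + 1} : Finset (Fin n)) := by
    ext; simp
  calc ∑ i, (f (Iio i) - f (Iic i)) = ∑ k ∈ range n, (g k - g (k + 1)) := by
        rw [← Fin.sum_univ_eq_sum_range (fun k => g k - g (k + 1))]
        simp only [g, hIio, hIic]
    _ = f ∅ - f univ := by
        rw [sum_range_sub']
        simp [g, Fin.is_lt]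

theorem exists_locally_traceless_decomposition {κ : Type*} [Fintype κ] [DecidableEq κ] {n : ℕ}
    {M : Matrix (Fin n → κ) (Fin n → κ) ℂ} (hM : M.IsHermitian) (htr : M.trace = 0) :
    ∃ X : Fin n → Matrix (Fin n → κ) (Fin n → κ) ℂ, M = ∑ i, X i ∧ (∀ i, (X i).IsHermitian) ∧
      ∀ i a b, ∑ s, X i (update a i s) (update b i s) = 0 := by
  refine ⟨fun i => depolarize (Iio i) M - depolarize (Iic i) M, ?_,
    fun i => (hM.depolarize _).sub (hM.depolarize _), fun i a b => ?_⟩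
  · rw [Fin.sum_Iio_sub_Iic (depolarize · M), depolarize_empty, depolarize_univ, htr]
    simp
  · simp only [← Iio_insert, Matrix.sub_apply, sum_sub_distrib,
      sum_depolarize_insert_update notMem_Iio_self, sub_self]

/-- The quantum `W₁` distance dominates the trace distance: for density
matrices `ρ, σ` on `(ℂ^d)^{⊗n}`, `‖ρ-σ‖₁ ≤ ‖ρ-σ‖_{W₁}`. -/
theorem traceDist_le_qW1 {d n : ℕ}
    (ρ σ : Matrix (Fin n → Fin d) (Fin n → Fin d) ℂ)
    (hρ : ρ.PosSemidef) (hσ : σ.PosSemidef)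
    (hρ1 : ρ.trace = 1) (hσ1 : σ.trace = 1) :
    halfTraceNorm (ρ - σ) ≤ qW1 ρ σ := by
  obtain ⟨X, hsum, hX, hptr⟩ := exists_locally_traceless_decomposition (hρ.1.sub hσ.1)
    (by rw [trace_sub, hρ1, hσ1, sub_self])
  refine le_csInf ⟨_, X, hsum, hX, hptr, rfl⟩ ?_
  rintro _ ⟨Y, hY, hYh, -, rfl⟩
  rw [hY]
  exact halfTraceNorm_sum_le _ _ fun i _ => hYh i
end
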